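/- For the centerless N=2 superconformal Neveu-Schwarz algebra L and any n ≥ 1, if r ∈ L^{⊗n} satisfies x ∗ r = 0 for all x ∈ L (adjoint diagonal action), then r = 0. In particular, L has trivial center and (L⊗L)^L = 0. -/

import Mathlib

noncomputable section
open Finsupp

/-- Sign `(-1)^(a*b)` for parities `a b : ZMod 2`. -/
def sg (a b : ZMod 2) : ℂ := if a * b = 1 then -1 else 1

/-- A (basis-presented) superalgebra datum: a basis `ι`, a parity function and
structure "constants" giving the bracket of two basis elements. -/
structure SuperData where
  ι : Type
  par : ι → ZMod 2
  br : ι → ι → (ι →₀ ℂ)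

namespace SuperData

variable (D : SuperData)

/-- The underlying vector space, with basis `ι`. -/
abbrev V := D.ι →₀ ℂ

/-- The tensor square `V ⊗ V`, modelled on the basis `ι × ι`. -/
abbrev T2 := (D.ι × D.ι) →₀ ℂ

/-- The tensor cube `V ⊗ V ⊗ V`. -/
abbrev T3 := (D.ι × D.ι × D.ι) →₀ ℂ

/-- The `n`-fold tensor power. -/
abbrev Tn (n : ℕ) := ((Fin n → D.ι) →₀ ℂ)

/-- Basis vectors. -/
def e (i : D.ι) : D.V := Finsupp.single i 1

/-- Linear extension of a map defined on the basis. -/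
def lift {α : Type*} {M : Type*} [AddCommGroup M] [Module ℂ M] (g : α → M) :
    (α →₀ ℂ) →ₗ[ℂ] M :=
  Finsupp.linearCombination ℂ g

/-- The bilinear bracket extending `D.br`. -/
def brk : D.V →ₗ[ℂ] D.V →ₗ[ℂ] D.V :=
  lift fun i => lift fun j => D.br i j

/-- Bilinear tensor-product map `V × V → V ⊗ V`. -/
def tens2 : D.V →ₗ[ℂ] D.V →ₗ[ℂ] D.T2 :=
  lift fun i => lift fun j => Finsupp.single (i, j) 1

/-- Trilinear tensor-product map. -/
def tens3 : D.V →ₗ[ℂ] D.V →ₗ[ℂ] D.V →ₗ[ℂ] D.T3 :=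
  lift fun i => lift fun j => lift fun k => Finsupp.single (i, j, k) 1

/-- The super-twist map `τ(x ⊗ y) = (-1)^{|x||y|} y ⊗ x`. -/
def tau : D.T2 →ₗ[ℂ] D.T2 :=
  lift fun p => sg (D.par p.1) (D.par p.2) • Finsupp.single (p.2, p.1) 1

/-- The super-cyclic map `ξ = (1⊗τ)(τ⊗1)` on the tensor cube. -/
def xi : D.T3 →ₗ[ℂ] D.T3 :=
  lift fun p => sg (D.par p.1) (D.par p.2.1 + D.par p.2.2) •
    Finsupp.single (p.2.1, p.2.2, p.1) 1

/-- The adjoint diagonal action of `V` on `V ⊗ V`: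
`x ∗ (a⊗b) = [x,a]⊗b + (-1)^{|x||a|} a⊗[x,b]`. -/
def star2 : D.V →ₗ[ℂ] D.T2 →ₗ[ℂ] D.T2 :=
  lift fun k => lift fun p =>
    D.tens2 (D.br k p.1) (D.e p.2) +
      sg (D.par k) (D.par p.1) • D.tens2 (D.e p.1) (D.br k p.2)

/-- The adjoint diagonal action of `V` on `V ⊗ V ⊗ V`. -/
def star3 : D.V →ₗ[ℂ] D.T3 →ₗ[ℂ] D.T3 :=
  lift fun k => lift fun p =>
    D.tens3 (D.br k p.1) (D.e p.2.1) (D.e p.2.2) +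
      sg (D.par k) (D.par p.1) • D.tens3 (D.e p.1) (D.br k p.2.1) (D.e p.2.2) +
      sg (D.par k) (D.par p.1 + D.par p.2.1) •
        D.tens3 (D.e p.1) (D.e p.2.1) (D.br k p.2.2)

/-- The adjoint diagonal action of `V` on the `n`-fold tensor power, with Koszul signs. -/
def starN (n : ℕ) : D.V →ₗ[ℂ] D.Tn n →ₗ[ℂ] D.Tn n :=
  lift fun k => lift fun f =>
    ∑ i : Fin n, sg (D.par k) (∑ j ∈ Finset.Iio i, D.par (f j)) •
      Finsupp.mapDomain (Function.update f i) (D.br k (f i))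

/-- `c(r) = [r¹²,r¹³] + [r¹²,r²³] + [r¹³,r²³]`, the Yang–Baxter expression. -/
def cybe (r : D.T2) : D.T3 :=
  r.sum fun p a => r.sum fun q b => (a * b) •
    (sg (D.par q.1) (D.par p.2) •
        (D.tens3 (D.br p.1 q.1) (D.e p.2) (D.e q.2) +
          D.tens3 (D.e p.1) (D.e q.1) (D.br p.2 q.2)) +
      D.tens3 (D.e p.1) (D.br p.2 q.1) (D.e q.2))

/-- The image of `1 - τ` in `V ⊗ V`. -/
def ImSkew : Submodule ℂ D.T2 := LinearMap.range (LinearMap.id - D.tau)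

/-- `x` is homogeneous of parity `dp`. -/
def Homog1 (dp : ZMod 2) (x : D.V) : Prop := ∀ i ∈ x.support, D.par i = dp

/-- `t ∈ V ⊗ V` is homogeneous of parity `dp`. -/
def Homog2 (dp : ZMod 2) (t : D.T2) : Prop :=
  ∀ p ∈ t.support, D.par p.1 + D.par p.2 = dp

/-- `t ∈ V ⊗ V` is even. -/
def IsEven2 (t : D.T2) : Prop := D.Homog2 0 t

/-- Super skew-symmetry of the bracket (on homogeneous elements). -/
def SuperSkew : Prop :=
  ∀ (px py : ZMod 2) (x y : D.V), D.Homog1 px x → D.Homog1 py y →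
    D.brk x y = -sg px py • D.brk y x

/-- The graded Jacobi identity
`(-1)^{|x||z|}[x,[y,z]] + (-1)^{|y||x|}[y,[z,x]] + (-1)^{|z||y|}[z,[x,y]] = 0`. -/
def SuperJacobi : Prop :=
  ∀ (px py pz : ZMod 2) (x y z : D.V), D.Homog1 px x → D.Homog1 py y → D.Homog1 pz z →
    sg px pz • D.brk x (D.brk y z) + sg py px • D.brk y (D.brk z x) +
      sg pz py • D.brk z (D.brk x y) = 0

/-- `D` presents a Lie superalgebra. -/
def IsLieSuper : Prop := D.SuperSkew ∧ D.SuperJacobi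

/-- `f : V → V ⊗ V` is a homogeneous derivation of parity `dp`. -/
def IsDer2 (dp : ZMod 2) (f : D.V →ₗ[ℂ] D.T2) : Prop :=
  ∀ i j, f (D.br i j) =
    sg dp (D.par i) • D.star2 (D.e i) (f (D.e j)) -
      sg (D.par j) (dp + D.par i) • D.star2 (D.e j) (f (D.e i))

/-- `f : V → V` is a homogeneous derivation of parity `dp` (adjoint coefficients). -/
def IsDerV (dp : ZMod 2) (f : D.V →ₗ[ℂ] D.V) : Prop :=
  ∀ i j, f (D.br i j) =
    sg dp (D.par i) • D.brk (D.e i) (f (D.e j)) -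
      sg (D.par j) (dp + D.par i) • D.brk (D.e j) (f (D.e i))

/-- `(1 ⊗ Δ)` as a map `V⊗V → V⊗V⊗V`, for `Δ : V → V⊗V`. -/
def oneDelta (Δf : D.V →ₗ[ℂ] D.T2) : D.T2 →ₗ[ℂ] D.T3 :=
  lift fun p => Finsupp.mapDomain (fun q : D.ι × D.ι => (p.1, q.1, q.2)) (Δf (D.e p.2))

/-- `Δf` makes `D` into a Lie superbialgebra: `Δf` respects the `ℤ₂`-grading, has image
in `Im(1-τ)`, satisfies co-Jacobi, and is compatible with the bracket via the
adjoint diagonal action. -/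
def IsSBialg (Δf : D.V →ₗ[ℂ] D.T2) : Prop :=
  (∀ (dp : ZMod 2) (x : D.V), D.Homog1 dp x → D.Homog2 dp (Δf x)) ∧
  (∀ x : D.V, Δf x ∈ D.ImSkew) ∧
  (∀ x : D.V, D.oneDelta Δf (Δf x) + D.xi (D.oneDelta Δf (Δf x)) +
      D.xi (D.xi (D.oneDelta Δf (Δf x))) = 0) ∧
  (∀ i j, Δf (D.br i j) =
    D.star2 (D.e i) (Δf (D.e j)) - sg (D.par i) (D.par j) • D.star2 (D.e j) (Δf (D.e i)))

end SuperData

open SuperData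

/-- Basis of the centerless `N=2` superconformal Neveu–Schwarz algebra:
`L m`, `I m` for `m : ℤ`, and `G s k` denoting `G_{k+1/2}^±` (`s = true` for `+`). -/
inductive NSI : Type
  | L : ℤ → NSI
  | I : ℤ → NSI
  | G : Bool → ℤ → NSI
  deriving DecidableEq

/-- Structure constants of the centerless `N=2` Neveu–Schwarz algebra
(`G s k` stands for `G^±_r` with `r = k + 1/2`). -/
def nsBr : NSI → NSI → (NSI →₀ ℂ)
  | .L m, .L n => ((m : ℂ) - n) • Finsupp.single (.L (m + n)) 1
  | .L m, .I n => (-(n : ℂ)) • Finsupp.single (.I (m + n)) 1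
  | .I m, .L n => (m : ℂ) • Finsupp.single (.I (m + n)) 1
  | .I _, .I _ => 0
  | .L m, .G s k => (((m : ℂ) - 2 * k - 1) / 2) • Finsupp.single (.G s (m + k)) 1
  | .G s k, .L m => (-(((m : ℂ) - 2 * k - 1) / 2)) • Finsupp.single (.G s (m + k)) 1
  | .I m, .G s k => (if s then (1 : ℂ) else -1) • Finsupp.single (.G s (m + k)) 1
  | .G s k, .I m => (if s then (-1 : ℂ) else 1) • Finsupp.single (.G s (m + k)) 1
  | .G true k, .G false l =>
      (2 : ℂ) • Finsupp.single (.L (k + l + 1)) 1 +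
        ((k : ℂ) - l) • Finsupp.single (.I (k + l + 1)) 1
  | .G false k, .G true l =>
      (2 : ℂ) • Finsupp.single (.L (k + l + 1)) 1 +
        ((l : ℂ) - k) • Finsupp.single (.I (k + l + 1)) 1
  | .G true _, .G true _ => 0
  | .G false _, .G false _ => 0

/-- Parity on the Neveu–Schwarz basis. -/
def nsPar : NSI → ZMod 2
  | .G _ _ => 1
  | _ => 0

/-- The centerless `N=2` superconformal Neveu–Schwarz algebra. -/
def NSd : SuperData := ⟨NSI, nsPar, nsBr⟩

/-- Twice the `½ℤ`-degree: `deg L_m = deg I_m = -m`, `deg G_r^± = -r`. -/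
def deg2 : NSI → ℤ
  | .L m => -(2 * m)
  | .I m => -(2 * m)
  | .G _ k => -(2 * k + 1)


/-! `L_M` acts on a basis tensor `a₁ ⊗ ⋯ ⊗ aₙ` as
`∑ᵢ lCoeff M aᵢ • (a₁ ⊗ ⋯ ⊗ shift M aᵢ ⊗ ⋯ ⊗ aₙ)`, and `shift M` lowers the degree by `M`. Once
`M > |deg2 a|` for every factor `a` occurring in `r`, these shifted basis tensors are pairwise
distinct, so `L_M ∗ r = 0` forces `lCoeff M aᵢ = 0` for every factor of every basis tensor in the
support of `r`; for such `M` this happens only for `aᵢ = I_0`. Hence `r` is a multiple of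
`I_0^{⊗n}`, which `G⁺_{1/2}` does not annihilate since `[G⁺_{1/2}, I_0] = -G⁺_{1/2}`. The center
and `(L ⊗ L)^L` are the cases `n = 1` and `n = 2`; for the center one uses that `L_M` is even, so
that `[x, L_M] = -[L_M, x]`. -/

@[simp] theorem sg_zero_left (b : ZMod 2) : sg 0 b = 1 := by simp [sg]

@[simp] theorem sg_zero_right (a : ZMod 2) : sg a 0 = 1 := by simp [sg]

theorem Finsupp.eq_zero_of_sum_single_eq_zero {γ β R : Type*} [AddCommMonoid R] {S : Finset γ}
    {φ : γ → β} (hφ : Set.InjOn φ S) {w : γ → R} (h : ∑ s ∈ S, single (φ s) (w s) = 0) :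
    ∀ s ∈ S, w s = 0 := by
  classical
  intro s hs
  have := congrArg (· (φ s)) h
  simp only [finsetSum_apply, single_apply, coe_zero, Pi.zero_apply] at this
  rwa [Finset.sum_eq_single_of_mem s hs fun t ht hts => if_neg fun h => hts (hφ ht hs h),
    if_pos rfl] at this

theorem Function.injOn_update_map {ι α : Type*} [DecidableEq ι] {s : α → α}
    (hs : s.Injective) {A : Set α} (hA : ∀ a ∈ A, s a ∉ A) :
    Set.InjOn (fun p : (ι → α) × ι => Function.update p.1 p.2 (s (p.1 p.2)))
      {p | ∀ j, p.1 j ∈ A} := by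
  rintro ⟨f, i⟩ hf ⟨g, j⟩ hg h
  simp only at h
  obtain rfl : i = j := by
    by_contra hij
    have := congrFun h i
    rw [Function.update_self, Function.update_of_ne hij] at this
    exact hA _ (hf i) (this ▸ hg i)
  refine Prod.ext (funext fun j => ?_) rfl
  rcases eq_or_ne j i with rfl | hj
  · exact hs (by simpa using congrFun h j)
  · simpa [Function.update_of_ne hj] using congrFun h j

namespace SuperData

variable (D : SuperData)

theorem lift_single {α M : Type*} [AddCommGroup M] [Module ℂ M] (g : α → M) (a : α) (c : ℂ) :
    lift g (single a c) = c • g a :=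
  linearCombination_single ℂ c a

theorem brk_e_left (k : D.ι) (x : D.V) :
    D.brk (D.e k) x = x.sum fun i c => c • D.br k i := by
  rw [brk, e, lift_single, one_smul, lift, linearCombination_apply]

theorem brk_e_right (x : D.V) (k : D.ι) :
    D.brk x (D.e k) = x.sum fun i c => c • D.br i k := by
  rw [brk, lift, linearCombination_apply, LinearMap.finsupp_sum_apply]
  simp only [LinearMap.smul_apply, e, lift_single, one_smul]

theorem tens2_e_right (x : D.V) (b : D.ι) : D.tens2 x (D.e b) = x.mapDomain (·, b) := by
  rw [tens2, lift, linearCombination_apply, LinearMap.finsupp_sum_apply, mapDomain]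
  simp only [LinearMap.smul_apply, e, lift_single, smul_single_one]

theorem tens2_e_left (a : D.ι) (y : D.V) : D.tens2 (D.e a) y = y.mapDomain (a, ·) := by
  rw [tens2, e, lift_single, one_smul, lift, linearCombination_apply, mapDomain]
  simp only [smul_single_one]

theorem starN_e (n : ℕ) (k : D.ι) (r : D.Tn n) :
    D.starN n (D.e k) r = r.sum fun f c => c • ∑ i : Fin n,
      sg (D.par k) (∑ j ∈ Finset.Iio i, D.par (f j)) •
        mapDomain (Function.update f i) (D.br k (f i)) := by
  rw [starN, e, lift_single, one_smul, lift, linearCombination_apply]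

theorem starN_one_mapDomain_const (y x : D.V) :
    D.starN 1 y (x.mapDomain (Function.const (Fin 1))) =
      (D.brk y x).mapDomain (Function.const (Fin 1)) := by
  refine LinearMap.congr_fun₂ (f := (D.starN 1).compl₂ (lmapDomain ℂ ℂ (Function.const (Fin 1))))
    (g := D.brk.compr₂ (lmapDomain ℂ ℂ (Function.const (Fin 1)))) ?_ y x
  ext k i : 4
  have hupd : Function.update (Function.const (Fin 1) i) 0 = Function.const (Fin 1) := by
    ext a j
    simp [Subsingleton.elim j 0]
  simp [brk, starN, lift_single, hupd]

theorem star2_mapDomain_finTwoArrowEquiv (x : D.V) (t : D.Tn 2) :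
    D.star2 x (t.mapDomain (finTwoArrowEquiv D.ι)) =
      (D.starN 2 x t).mapDomain (finTwoArrowEquiv D.ι) := by
  refine LinearMap.congr_fun₂ (f := D.star2.compl₂ (lmapDomain ℂ ℂ (finTwoArrowEquiv D.ι)))
    (g := (D.starN 2).compr₂ (lmapDomain ℂ ℂ (finTwoArrowEquiv D.ι))) ?_ x t
  ext k f : 4
  have h0 : (fun f : Fin 2 → D.ι => (f 0, f 1)) ∘ Function.update f 0 = (·, f 1) := by
    ext a <;> simp
  have h1 : (fun f : Fin 2 → D.ι => (f 0, f 1)) ∘ Function.update f 1 = (f 0, ·) := by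
    ext a <;> simp
  have hIio0 : Finset.Iio (0 : Fin 2) = ∅ := by decide
  have hIio1 : Finset.Iio (1 : Fin 2) = {0} := by decide
  simp [star2, starN, lift_single, tens2_e_left, tens2_e_right, Fin.sum_univ_two, hIio0, hIio1,
    mapDomain_add, mapDomain_smul, ← mapDomain_comp, h0, h1]

end SuperData

namespace NSI

def shift (M : ℤ) : NSI → NSI
  | .L n => .L (M + n)
  | .I n => .I (M + n)
  | .G s k => .G s (M + k)

def lCoeff (M : ℤ) : NSI → ℂ
  | .L n => (M : ℂ) - n
  | .I n => -(n : ℂ)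
  | .G _ k => ((M : ℂ) - 2 * k - 1) / 2

theorem shift_injective (M : ℤ) : (shift M).Injective := by
  intro a b h
  cases a <;> cases b <;> simp_all [shift]

theorem deg2_shift (M : ℤ) (a : NSI) : deg2 (shift M a) = deg2 a - 2 * M := by
  cases a <;> simp only [shift, deg2] <;> ring

theorem eq_I_zero_of_lCoeff_eq_zero {M : ℤ} {a : NSI} (ha : |deg2 a| < M)
    (h : lCoeff M a = 0) : a = .I 0 := by
  cases a with
  | L m =>
    have : M = m := by exact_mod_cast sub_eq_zero.mp h
    simp only [deg2] at ha
    grind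
  | I m => simpa [lCoeff] using h
  | G s k =>
    have : M = 2 * k + 1 := by
      simp only [lCoeff, div_eq_zero_iff, two_ne_zero, or_false] at h
      exact_mod_cast (by linear_combination h : (M : ℂ) = 2 * k + 1)
    simp only [deg2] at ha
    grind

end NSI

open NSI

theorem nsBr_L_left (M : ℤ) (a : NSI) : nsBr (.L M) a = single (shift M a) (lCoeff M a) := by
  cases a <;> simp [nsBr, shift, lCoeff, smul_single]

theorem nsBr_L_right (M : ℤ) (a : NSI) : nsBr a (.L M) = -nsBr (.L M) a := by
  cases a <;> simp [nsBr, add_comm, smul_single]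

attribute [reducible] NSd

namespace NSd

theorem starN_e_L (n : ℕ) (M : ℤ) (r : NSd.Tn n) :
    NSd.starN n (NSd.e (.L M)) r = ∑ p ∈ r.support ×ˢ Finset.univ,
      single (Function.update p.1 p.2 (shift M (p.1 p.2))) (r p.1 * lCoeff M (p.1 p.2)) := by
  rw [starN_e, Finsupp.sum, Finset.sum_product]
  refine Finset.sum_congr rfl fun f _ => ?_
  simp only [Finset.smul_sum]
  refine Finset.sum_congr rfl fun i _ => ?_
  simp [nsPar, nsBr_L_left, mapDomain_single, smul_single]

theorem eq_single_of_starN_e_L_eq_zero {n : ℕ} {r : NSd.Tn n}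
    (h : ∀ M, NSd.starN n (NSd.e (.L M)) r = 0) :
    r = single (fun _ => .I 0) (r fun _ => .I 0) := by
  obtain ⟨B, hB⟩ := ((r.support ×ˢ Finset.univ).image
    fun p : (Fin n → NSI) × Fin n => |deg2 (p.1 p.2)|).exists_le
  have hdeg : ∀ f ∈ r.support, ∀ j, |deg2 (f j)| < B + 1 := fun f hf j =>
    Int.lt_add_one_of_le <| hB _ <|
      Finset.mem_image.2 ⟨(f, j), Finset.mem_product.2 ⟨hf, Finset.mem_univ j⟩, rfl⟩
  have hinj := Function.injOn_update_map (ι := Fin n) (shift_injective (B + 1))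
    (A := {a | |deg2 a| < B + 1}) fun a ha => by
      simp only [Set.mem_ofPred_eq, deg2_shift] at ha ⊢
      grind
  have hcoeff := Finsupp.eq_zero_of_sum_single_eq_zero
    (hinj.mono fun p hp j => hdeg _ (Finset.mem_product.1 hp).1 j)
    ((starN_e_L n (B + 1) r).symm.trans (h _))
  refine support_subset_singleton.1 fun f hf => Finset.mem_singleton.2 (funext fun j => ?_)
  refine eq_I_zero_of_lCoeff_eq_zero (hdeg f hf j) ?_
  simpa [mem_support_iff.1 hf] using
    hcoeff (f, j) (Finset.mem_product.2 ⟨hf, Finset.mem_univ j⟩)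

theorem starN_e_G_single (n : ℕ) (c : ℂ) :
    NSd.starN n (NSd.e (.G true 0)) (single (fun _ => .I 0) c) =
      ∑ i ∈ Finset.univ, single (Function.update (fun _ => .I 0) i (.G true 0)) (-c) := by
  simp [starN_e, sum_single_index, Finset.smul_sum, nsPar, nsBr, ← single_neg,
    mapDomain_single, smul_single]

theorem starN_invariant_eq_zero {n : ℕ} (hn : 1 ≤ n) {r : NSd.Tn n}
    (h : ∀ x, NSd.starN n x r = 0) : r = 0 := by
  have hr := eq_single_of_starN_e_L_eq_zero fun M => h _
  rw [hr] at h
  have hinj : Function.Injective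
      fun i : Fin n => Function.update (fun _ => NSI.I 0) i (.G true 0) := fun i j hij => by
    by_contra hne
    simpa [Function.update_of_ne hne] using congrFun hij i
  have hc := Finsupp.eq_zero_of_sum_single_eq_zero hinj.injOn
    ((starN_e_G_single n _).symm.trans (h _)) ⟨0, hn⟩ (Finset.mem_univ _)
  rw [hr, neg_eq_zero.1 hc, single_zero]

theorem brk_e_L_right (x : NSd.V) (M : ℤ) :
    NSd.brk x (NSd.e (.L M)) = -NSd.brk (NSd.e (.L M)) x := by
  simp only [brk_e_left, brk_e_right, nsBr_L_right, smul_neg, Finsupp.sum_neg]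

theorem eq_zero_of_forall_brk_eq_zero {x : NSd.V} (h : ∀ y, NSd.brk x y = 0) : x = 0 := by
  set x' := x.mapDomain (Function.const (Fin 1))
  have hx' : x' = single (fun _ => .I 0) (x' fun _ => .I 0) :=
    eq_single_of_starN_e_L_eq_zero fun M => by
      rw [starN_one_mapDomain_const, ← neg_neg (NSd.brk _ x), ← brk_e_L_right, h, neg_zero,
        mapDomain_zero]
  have hx : x = single (.I 0) (x' fun _ => .I 0) :=
    mapDomain_injective (Function.const_injective (α := Fin 1) (β := NSI)) <| by
      rw [mapDomain_single]
      exact hx'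
  have hG := h (NSd.e (.G true 0))
  rw [hx, brk_e_right, sum_single_index (by simp)] at hG
  simp only [nsBr, ↓reduceIte, add_zero, one_smul, smul_single, smul_eq_mul, mul_one,
    single_eq_zero] at hG
  rw [hx, hG, single_zero]

theorem star2_invariant_eq_zero {t : NSd.T2} (h : ∀ x, NSd.star2 x t = 0) : t = 0 := by
  have ht : t = (t.mapDomain (finTwoArrowEquiv NSd.ι).symm).mapDomain (finTwoArrowEquiv NSd.ι) := by
    rw [← mapDomain_comp, Equiv.self_comp_symm, mapDomain_id]
  have ht' : t.mapDomain (finTwoArrowEquiv NSd.ι).symm = 0 :=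
    starN_invariant_eq_zero (by norm_num) fun x =>
      mapDomain_injective (finTwoArrowEquiv NSd.ι).injective <| by
        rw [← star2_mapDomain_finTwoArrowEquiv, ← ht, h, mapDomain_zero]
  rw [ht, ht', mapDomain_zero]

end NSd

/-- for any `n ≥ 1`, the only element of `L^{⊗n}` annihilated by the
adjoint diagonal action of every element of `L` is `0`; in particular `L` has trivial
center and `(L ⊗ L)^L = 0`. -/
theorem NS_tensor_invariants_trivial :
    (∀ n : ℕ, 1 ≤ n → ∀ r : NSd.Tn n, (∀ x : NSd.V, NSd.starN n x r = 0) → r = 0) ∧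
    (∀ x : NSd.V, (∀ y : NSd.V, NSd.brk x y = 0) → x = 0) ∧
    (∀ t : NSd.T2, (∀ x : NSd.V, NSd.star2 x t = 0) → t = 0) :=
  ⟨fun _ hn _ => NSd.starN_invariant_eq_zero hn, fun _ => NSd.eq_zero_of_forall_brk_eq_zero,
    fun _ => NSd.star2_invariant_eq_zero⟩
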